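/- arXiv:1809.04564 — 5 statements merged into one kernel-verified Lean document; each statement's English description precedes it below -/
import Mathlib

section
/- Let Z be a measurable space, D a probability measure on Z, and f : W × Z → ℝ a loss function (W a measurable parameter space) such that all integrals below exist. Let A : Z^n × Θ → W be a (randomized) learning algorithm, where (Θ, μ_Θ) is a probability space modeling the algorithm's internal randomness. Suppose A is ε-uniformly stable, i.e., for every pair of datasets S, S' ∈ Z^n that differ in at most one coordinate and every z ∈ Z, ∫_Θ (f(A(S,θ); z) − f(A(S',θ); z)) dμ_Θ(θ) ≤ ε. Then the expected generalization error is bounded by ε: ∫_{Z^n} ∫_Θ ( ∫_Z f(A(S,θ); z) dD(z) − (1/n) Σ_{i=1}^n f(A(S,θ); z_i) ) dμ_Θ(θ) dD^n(S) ≤ ε, where S = (z_1, …, z_n) and D^n is the n-fold product measure of D. -/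
/-!
Fix an index `i` and draw a ghost sample `z ∼ D` independent of `S`. Exchanging `S i` with `z`
preserves the law of `(S, z)`, so the expected population risk of the model trained on `S`
equals the expected loss, at `S i`, of the model trained on `S` with its `i`-th example replaced
by `z`. Subtracting the expected loss at `S i` of the model trained on `S` itself leaves, for each
`(S, z)`, the θ-average of a replace-one difference, which stability bounds by `ε`. Averaging
over `i` gives the bound on the expected generalization gap.
-/

open MeasureTheory

/-- `ℓ S θ z` is the loss at `z` of the parameter the algorithm outputs on the sample `S` with
internal randomness `θ`. -/
def UniformlyStable {ι Z Θ : Type*} [MeasurableSpace Θ] (μΘ : Measure Θ)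
    (ℓ : (ι → Z) → Θ → Z → ℝ) (ε : ℝ) : Prop :=
  ∀ S S' : ι → Z, (∃ j, ∀ i, i ≠ j → S i = S' i) → ∀ z, ∫ θ, (ℓ S θ z - ℓ S' θ z) ∂μΘ ≤ ε

theorem UniformlyStable.integral_update_sub_le {ι Z Θ : Type*} [DecidableEq ι]
    [MeasurableSpace Θ] {μΘ : Measure Θ} {ℓ : (ι → Z) → Θ → Z → ℝ} {ε : ℝ}
    (h : UniformlyStable μΘ ℓ ε) (S : ι → Z) (i : ι) (z w : Z) :
    ∫ θ, (ℓ (Function.update S i z) θ w - ℓ S θ w) ∂μΘ ≤ ε :=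
  h _ _ ⟨i, fun _ hk => Function.update_of_ne hk _ _⟩ w

namespace MeasurableEquiv

variable {ι α β γ : Type*} [MeasurableSpace α] [MeasurableSpace β] [MeasurableSpace γ]

variable (α β γ) in
def prodRightComm : (α × β) × γ ≃ᵐ (α × γ) × β :=
  (prodAssoc.trans ((refl α).prodCongr prodComm)).trans prodAssoc.symm

@[simp]
theorem prodRightComm_apply (p : (α × β) × γ) :
    prodRightComm α β γ p = ((p.1.1, p.2), p.1.2) := rfl

variable (α) in
def exchangeCoord [DecidableEq ι] (i : ι) : (ι → α) × α ≃ᵐ (ι → α) × α :=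
  ((piOptionEquivProd fun _ : Option ι => α).symm.trans
    (piCongrLeft (fun _ => α) (Equiv.swap none (some i)))).trans
    (piOptionEquivProd fun _ : Option ι => α)

@[simp]
theorem exchangeCoord_apply [DecidableEq ι] (i : ι) (S : ι → α) (z : α) :
    exchangeCoord α i (S, z) = (Function.update S i z, S i) := by
  have he (g : Option ι → α) :
      piOptionEquivProd (fun _ => α) g = (fun j => g (some j), g none) := rfl
  have hS : (piOptionEquivProd fun _ : Option ι => α).symm (S, z) = fun o => o.elim z S := by
    funext o; cases o <;> rfl
  have hσ (g : Option ι → α) :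
      Equiv.piCongrLeft (fun _ => α) (Equiv.swap none (some i)) g = g ∘ Equiv.swap none (some i) :=
    funext fun o => by simp [Equiv.piCongrLeft_apply_eq_cast]
  simp only [exchangeCoord, coe_trans, Function.comp_apply, hS, coe_piCongrLeft, hσ, he]
  refine Prod.ext (funext fun j => ?_) (by simp)
  by_cases hj : j = i <;> simp [Equiv.swap_apply_def, hj]

end MeasurableEquiv

open MeasurableEquiv

theorem measurePreserving_prodRightComm {α β γ : Type*} [MeasurableSpace α] [MeasurableSpace β]
    [MeasurableSpace γ] (μ : Measure α) (ν : Measure β) (ρ : Measure γ) [SigmaFinite μ]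
    [SigmaFinite ν] [SigmaFinite ρ] :
    MeasurePreserving (prodRightComm α β γ) ((μ.prod ν).prod ρ) ((μ.prod ρ).prod ν) :=
  ((measurePreserving_prodAssoc μ ρ ν).symm _).comp
    (((MeasurePreserving.id μ).prod Measure.measurePreserving_swap).comp
      (measurePreserving_prodAssoc μ ν ρ))

theorem measurePreserving_exchangeCoord {ι α : Type*} [Fintype ι] [DecidableEq ι]
    [MeasurableSpace α] (μ : Measure α) [SigmaFinite μ] (i : ι) :
    MeasurePreserving (exchangeCoord α i)
      ((Measure.pi fun _ => μ).prod μ) ((Measure.pi fun _ => μ).prod μ) := by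
  have he : MeasurePreserving (piOptionEquivProd fun _ : Option ι => α).symm
      ((Measure.pi fun _ => μ).prod μ) (Measure.pi fun _ : Option ι => μ) :=
    ⟨(piOptionEquivProd _).symm.measurable, Measure.pi_map_piOptionEquivProd fun _ => μ⟩
  exact he.symm.comp ((measurePreserving_piCongrLeft (fun _ => μ) _).comp he)

theorem sub_one_div_card_mul_sum_le {ι : Type*} [Fintype ι] [Nonempty ι] {a ε : ℝ} {b : ι → ℝ}
    (h : ∀ i, a - b i ≤ ε) : a - 1 / (Fintype.card ι : ℝ) * ∑ i, b i ≤ ε := by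
  have hcard : (0 : ℝ) < Fintype.card ι := by exact_mod_cast Fintype.card_pos
  have hsum : (Fintype.card ι : ℝ) * (a - ε) ≤ ∑ i, b i := by
    simpa using Finset.card_nsmul_le_sum Finset.univ b (a - ε) fun i _ => by linarith [h i]
  rw [one_div, ← div_eq_inv_mul, sub_le_comm, le_div_iff₀ hcard]
  linarith

namespace UniformlyStable

variable {ι Z Θ : Type*} [Fintype ι] [MeasurableSpace Z] [MeasurableSpace Θ]
  {D : Measure Z} [IsProbabilityMeasure D] {μΘ : Measure Θ} [SigmaFinite μΘ]
  {ℓ : (ι → Z) → Θ → Z → ℝ} {ε : ℝ}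

theorem integral_integral_sub_integral_eval_le (h : UniformlyStable μΘ ℓ ε) (i : ι)
    (hInt : Integrable (fun q : ((ι → Z) × Θ) × Z => ℓ q.1.1 q.1.2 q.2)
      (((Measure.pi fun _ => D).prod μΘ).prod D))
    (hInt_i : Integrable (fun q : (ι → Z) × Θ => ℓ q.1 q.2 (q.1 i))
      ((Measure.pi fun _ => D).prod μΘ)) :
    ∫ q, ∫ z, ℓ q.1 q.2 z ∂D ∂((Measure.pi fun _ => D).prod μΘ)
      - ∫ q, ℓ q.1 q.2 (q.1 i) ∂((Measure.pi fun _ => D).prod μΘ) ≤ ε := by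
  classical
  set P := Measure.pi fun _ : ι => D
  have hR := measurePreserving_prodRightComm P D μΘ
  let T := ((exchangeCoord Z i).prodCongr (refl Θ)).trans (prodRightComm _ _ _)
  have hT : MeasurePreserving T ((P.prod D).prod μΘ) ((P.prod μΘ).prod D) :=
    hR.comp ((measurePreserving_exchangeCoord D i).prod (MeasurePreserving.id μΘ))
  have hT_apply (x : ((ι → Z) × Z) × Θ) :
      T x = ((Function.update x.1.1 i x.1.2, x.2), x.1.1 i) := by
    obtain ⟨⟨S, z⟩, θ⟩ := x
    change prodRightComm _ _ _ (exchangeCoord Z i (S, z), θ) = _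
    rw [exchangeCoord_apply]
    rfl
  have hpop : ∫ q, ∫ z, ℓ q.1 q.2 z ∂D ∂(P.prod μΘ)
      = ∫ x, ℓ (Function.update x.1.1 i x.1.2) x.2 (x.1.1 i) ∂((P.prod D).prod μΘ) :=
    calc _ = ∫ q, ℓ q.1.1 q.1.2 q.2 ∂((P.prod μΘ).prod D) := (integral_prod _ hInt).symm
      _ = _ := by simp_rw [← hT.integral_comp', hT_apply]
  have hemp : ∫ q, ℓ q.1 q.2 (q.1 i) ∂(P.prod μΘ)
      = ∫ x, ℓ x.1.1 x.2 (x.1.1 i) ∂((P.prod D).prod μΘ) :=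
    calc _ = ∫ y, ℓ y.1.1 y.1.2 (y.1.1 i) ∂((P.prod μΘ).prod D) := by
          rw [integral_fun_fst (fun q : (ι → Z) × Θ => ℓ q.1 q.2 (q.1 i))]; simp
      _ = _ := (hR.integral_comp' fun y => ℓ y.1.1 y.1.2 (y.1.1 i)).symm
  have hpopInt : Integrable (fun x => ℓ (Function.update x.1.1 i x.1.2) x.2 (x.1.1 i))
      ((P.prod D).prod μΘ) := by
    simpa [Function.comp_def, hT_apply] using
      (hT.integrable_comp_emb T.measurableEmbedding).mpr hInt
  have hempInt : Integrable (fun x => ℓ x.1.1 x.2 (x.1.1 i)) ((P.prod D).prod μΘ) :=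
    (hR.integrable_comp_emb (prodRightComm _ _ _).measurableEmbedding).mpr (hInt_i.comp_fst D)
  have hdiff : Integrable
      (fun x => ℓ (Function.update x.1.1 i x.1.2) x.2 (x.1.1 i) - ℓ x.1.1 x.2 (x.1.1 i))
      ((P.prod D).prod μΘ) := hpopInt.sub hempInt
  rw [hpop, hemp, ← integral_sub hpopInt hempInt, integral_prod _ hdiff]
  calc _ ≤ ∫ _, ε ∂(P.prod D) :=
        integral_mono hdiff.integral_prod_left (integrable_const ε)
          fun p => h.integral_update_sub_le p.1 i p.2 (p.1 i)
    _ = ε := by simp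

theorem expected_generalization_gap_le [Nonempty ι] (h : UniformlyStable μΘ ℓ ε)
    (hInt : Integrable (fun q : ((ι → Z) × Θ) × Z => ℓ q.1.1 q.1.2 q.2)
      (((Measure.pi fun _ => D).prod μΘ).prod D))
    (hInt_emp : ∀ i, Integrable (fun q : (ι → Z) × Θ => ℓ q.1 q.2 (q.1 i))
      ((Measure.pi fun _ => D).prod μΘ)) :
    ∫ S, ∫ θ, (∫ z, ℓ S θ z ∂D - 1 / (Fintype.card ι : ℝ) * ∑ i, ℓ S θ (S i)) ∂μΘ
      ∂(Measure.pi fun _ => D) ≤ ε := by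
  have hpop := hInt.integral_prod_left
  have hemp : Integrable
      (fun q : (ι → Z) × Θ => 1 / (Fintype.card ι : ℝ) * ∑ i, ℓ q.1 q.2 (q.1 i))
      ((Measure.pi fun _ => D).prod μΘ) :=
    (integrable_finsetSum _ fun i _ => hInt_emp i).const_mul _
  have hgap : Integrable (fun q : (ι → Z) × Θ =>
      ∫ z, ℓ q.1 q.2 z ∂D - 1 / (Fintype.card ι : ℝ) * ∑ i, ℓ q.1 q.2 (q.1 i))
      ((Measure.pi fun _ => D).prod μΘ) := hpop.sub hemp
  rw [← integral_prod _ hgap, integral_sub hpop hemp, integral_const_mul,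
    integral_finsetSum _ fun i _ => hInt_emp i]
  exact sub_one_div_card_mul_sum_le fun i =>
    h.integral_integral_sub_integral_eval_le i hInt (hInt_emp i)

end UniformlyStable

/-- Uniform stability implies generalization in expectation. -/
theorem stmt_0 {Z Θ W : Type*} [MeasurableSpace Z] [MeasurableSpace Θ]
    (D : Measure Z) [IsProbabilityMeasure D]
    (μΘ : Measure Θ) [IsProbabilityMeasure μΘ]
    (n : ℕ) (hn : 0 < n)
    (f : W → Z → ℝ)
    (A : (Fin n → Z) → Θ → W)
    (ε : ℝ)
    (hInt : Integrable
      (fun q : ((Fin n → Z) × Θ) × Z => f (A q.1.1 q.1.2) q.2)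
      (((Measure.pi fun _ : Fin n => D).prod μΘ).prod D))
    (hInt2 : ∀ i : Fin n, Integrable
      (fun q : (Fin n → Z) × Θ => f (A q.1 q.2) (q.1 i))
      ((Measure.pi fun _ : Fin n => D).prod μΘ))
    (hstab : ∀ S S' : Fin n → Z, (∃ j, ∀ i, i ≠ j → S i = S' i) →
      ∀ z : Z, ∫ θ, (f (A S θ) z - f (A S' θ) z) ∂μΘ ≤ ε) :
    ∫ S, (∫ θ, ((∫ z, f (A S θ) z ∂D) - (1 / (n : ℝ)) * ∑ i, f (A S θ) (S i)) ∂μΘ)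
      ∂(Measure.pi fun _ : Fin n => D) ≤ ε := by
  have : Nonempty (Fin n) := ⟨⟨0, hn⟩⟩
  simpa using UniformlyStable.expected_generalization_gap_le
    (ℓ := fun S θ z => f (A S θ) z) hstab hInt hInt2
end

section
/- Fix a dataset S = (z_1,…,z_n) and let f : ℝ^d × Z → ℝ be such that each f(·; z_i) is L-Lipschitz and β-smooth, and R_S(w) = (1/n)Σ_{i=1}^n f(w; z_i) attains a minimum at some w*_S. Run the stochastic gradient method (SGM, no momentum) for T steps with constant learning rate 0 < α < 2: w_{t+1} = w_t − α∇_w f(w_t; z_{i_t}) with i.i.d. uniform indices i_t ∈ {1,…,n}. Then min_{t=0,…,T} E_A[‖∇R_S(w_t)‖²] ≤ W / ( (T+1)·(α − α²/2) ) + βα²L² / (2α − α²), where W = E_A[R_S(w_0) − R_S(w*_S)]. -/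
/-!
One SGM step from `x` with a uniformly drawn sample decreases the empirical risk in expectation
by `α ‖∇R_S x‖²`, up to the noise term `β α² L² / 2`: this is the descent lemma for the
`β`-smooth `R_S`, averaged over the sample, where the stochastic gradient is unbiased. Since the
index drawn at step `t` is uniform and independent of `w_t`, averaging over index sequences gives
`E R_S(w_{t+1}) ≤ E R_S(w_t) - α E ‖∇R_S(w_t)‖² + β α² L² / 2`. The same bound for a virtual
step from `w_T`, whose risk is at least `R_S(w*_S)`, handles the last index; telescoping over
`t = 0, …, T` and taking the minimum gives the claim even with `α ≥ α - α² / 2` in the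
denominators.
-/

open scoped RealInnerProductSpace

section Gradient

variable {F : Type*} [NormedAddCommGroup F] [InnerProductSpace ℝ F] [CompleteSpace F]

theorem norm_gradient_le_of_lipschitz {h : F → ℝ} {L : ℝ} (hL : 0 ≤ L)
    (hlip : ∀ u v, |h u - h v| ≤ L * ‖u - v‖) (x : F) : ‖gradient h x‖ ≤ L := by
  have hlip' : LipschitzWith L.toNNReal h := LipschitzWith.of_dist_le_mul fun u v => by
    simpa [Real.dist_eq, dist_eq_norm, Real.coe_toNNReal _ hL] using hlip u v
  simpa [gradient, Real.coe_toNNReal _ hL] using norm_fderiv_le_of_lipschitz ℝ hlip' (x₀ := x)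

theorem le_add_inner_gradient_add_of_lipschitz_gradient {h : F → ℝ} {β : ℝ}
    (hd : Differentiable ℝ h) (hs : ∀ u v, ‖gradient h u - gradient h v‖ ≤ β * ‖u - v‖)
    (u v : F) : h v ≤ h u + ⟪gradient h u, v - u⟫ + β / 2 * ‖v - u‖ ^ 2 := by
  set Δ := v - u
  -- `φ` is antitone on `[0, ∞)` since `∇h` is `β`-Lipschitz; the claim is `φ 1 ≤ φ 0`
  set φ : ℝ → ℝ := fun t => h (u + t • Δ) - t * ⟪gradient h u, Δ⟫ - β / 2 * t ^ 2 * ‖Δ‖ ^ 2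
  have hφ : ∀ t, HasDerivAt φ
      (⟪gradient h (u + t • Δ), Δ⟫ - ⟪gradient h u, Δ⟫ - β * t * ‖Δ‖ ^ 2) t := by
    intro t
    have hγ : HasDerivAt (fun s : ℝ => u + s • Δ) Δ t := by
      simpa using ((hasDerivAt_id t).smul_const Δ).const_add u
    have hhγ := (hd (u + t • Δ)).hasGradientAt.hasFDerivAt.comp_hasDerivAt t hγ
    rw [InnerProductSpace.toDual_apply_apply] at hhγ
    refine ((hhγ.sub ((hasDerivAt_id t).mul_const ⟪gradient h u, Δ⟫)).sub
      (((hasDerivAt_pow 2 t).const_mul (β / 2)).mul_const (‖Δ‖ ^ 2))).congr_deriv ?_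
    push_cast
    ring
  have hanti : AntitoneOn φ (Set.Ici 0) := by
    refine antitoneOn_of_hasDerivWithinAt_nonpos (convex_Ici 0)
      (fun t _ => (hφ t).continuousAt.continuousWithinAt)
      (fun t _ => (hφ t).hasDerivWithinAt) fun t ht => ?_
    rw [interior_Ici, Set.mem_Ioi] at ht
    have hlip : ‖gradient h (u + t • Δ) - gradient h u‖ ≤ β * (t * ‖Δ‖) := by
      simpa [norm_smul, abs_of_pos ht] using hs (u + t • Δ) u
    have := real_inner_le_norm (gradient h (u + t • Δ) - gradient h u) Δ
    rw [inner_sub_left] at this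
    nlinarith [norm_nonneg Δ]
  have h01 : φ 1 ≤ φ 0 := hanti Set.self_mem_Ici (Set.mem_Ici.mpr zero_le_one) zero_le_one
  simp only [φ, zero_smul, one_smul, add_zero, zero_mul, one_mul, sub_zero, one_pow, mul_one,
    ne_eq, OfNat.ofNat_ne_zero, not_false_eq_true, zero_pow, mul_zero, Δ, add_sub_cancel] at h01
  linarith

variable {ι : Type*} [Fintype ι]

theorem hasGradientAt_const_mul_sum {ℓ : ι → F → ℝ} {x : F} (c : ℝ)
    (hd : ∀ i, DifferentiableAt ℝ (ℓ i) x) :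
    HasGradientAt (fun v => c * ∑ i, ℓ i v) (c • ∑ i, gradient (ℓ i) x) x := by
  rw [hasGradientAt_iff_hasFDerivAt, map_smul, map_sum]
  exact (HasFDerivAt.fun_sum fun i _ => (hd i).hasGradientAt.hasFDerivAt).const_mul c

theorem norm_inv_card_smul_sum_le [Nonempty ι] {E : Type*} [SeminormedAddCommGroup E]
    [NormedSpace ℝ E] {x : ι → E} {C : ℝ} (hx : ∀ i, ‖x i‖ ≤ C) :
    ‖(Fintype.card ι : ℝ)⁻¹ • ∑ i, x i‖ ≤ C := by
  have hcard : (0 : ℝ) < Fintype.card ι := by exact_mod_cast Fintype.card_pos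
  rw [norm_smul, norm_inv, Real.norm_natCast, inv_mul_le_iff₀ hcard]
  simpa using norm_sum_le_of_le Finset.univ fun i _ => hx i

-- The left side is the expected risk after one SGM step from `x` with a uniform sample.
theorem inv_card_mul_sum_sgd_step_le [Nonempty ι] {ℓ : ι → F → ℝ} {R : F → ℝ} {β L : ℝ}
    (hR : ∀ v, R v = (Fintype.card ι : ℝ)⁻¹ * ∑ i, ℓ i v)
    (hd : ∀ i, Differentiable ℝ (ℓ i))
    (hs : ∀ i u v, ‖gradient (ℓ i) u - gradient (ℓ i) v‖ ≤ β * ‖u - v‖) (hβ : 0 ≤ β)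
    (hg : ∀ i x, ‖gradient (ℓ i) x‖ ≤ L) (α : ℝ) (x : F) :
    (Fintype.card ι : ℝ)⁻¹ * ∑ i, R (x - α • gradient (ℓ i) x)
      ≤ R x - α * ‖gradient R x‖ ^ 2 + β * α ^ 2 * L ^ 2 / 2 := by
  set c : ℝ := (Fintype.card ι : ℝ)⁻¹
  have hgradR : ∀ y, HasGradientAt R (c • ∑ i, gradient (ℓ i) y) y := by
    intro y
    rw [show R = fun v => c * ∑ i, ℓ i v from funext hR]
    exact hasGradientAt_const_mul_sum c fun i => hd i y
  have hRs : ∀ u v, ‖gradient R u - gradient R v‖ ≤ β * ‖u - v‖ := by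
    intro u v
    rw [(hgradR u).gradient, (hgradR v).gradient, ← smul_sub, ← Finset.sum_sub_distrib]
    exact norm_inv_card_smul_sum_le fun i => hs i u v
  have hstep : ∀ i, R (x - α • gradient (ℓ i) x)
      ≤ R x - α * ⟪gradient R x, gradient (ℓ i) x⟫ + β * α ^ 2 * L ^ 2 / 2 := by
    intro i
    have hdesc := le_add_inner_gradient_add_of_lipschitz_gradient
      (fun y => (hgradR y).differentiableAt) hRs x (x - α • gradient (ℓ i) x)
    have hnoise : ‖α • gradient (ℓ i) x‖ ^ 2 ≤ α ^ 2 * L ^ 2 := by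
      rw [norm_smul, mul_pow, Real.norm_eq_abs, sq_abs]
      gcongr
      exact hg i x
    rw [sub_sub_cancel_left, inner_neg_right, real_inner_smul_right, norm_neg] at hdesc
    nlinarith
  have hmean : c * ∑ i, ⟪gradient R x, gradient (ℓ i) x⟫ = ‖gradient R x‖ ^ 2 := by
    rw [← inner_sum, ← real_inner_smul_right, ← (hgradR x).gradient, real_inner_self_eq_norm_sq]
  calc c * ∑ i, R (x - α • gradient (ℓ i) x)
      ≤ c * ∑ i, (R x - α * ⟪gradient R x, gradient (ℓ i) x⟫ + β * α ^ 2 * L ^ 2 / 2) := by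
        gcongr with i
        exact hstep i
    _ = R x - α * ‖gradient R x‖ ^ 2 + β * α ^ 2 * L ^ 2 / 2 := by
        rw [← hmean, Finset.sum_add_distrib, Finset.sum_sub_distrib, ← Finset.mul_sum]
        simp only [Finset.sum_const, Finset.card_univ, nsmul_eq_mul, c]
        field_simp

end Gradient

theorem Fintype.sum_sum_update {ι κ M : Type*} [DecidableEq ι] [Fintype ι] [Fintype κ]
    [AddCommMonoid M] (i : ι) (F : (ι → κ) → M) :
    ∑ x : ι → κ, ∑ k, F (Function.update x i k) = Fintype.card κ • ∑ x, F x := by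
  -- `(x, k) ↦ (update x i k, x i)` is an involution of `(ι → κ) × κ`
  let e : (ι → κ) × κ ≃ (ι → κ) × κ :=
    { toFun := fun p => (Function.update p.1 i p.2, p.1 i)
      invFun := fun p => (Function.update p.1 i p.2, p.1 i)
      left_inv := fun p => by simp
      right_inv := fun p => by simp }
  calc ∑ x : ι → κ, ∑ k, F (Function.update x i k)
      = ∑ p : (ι → κ) × κ, F (e p).1 := by rw [Fintype.sum_prod_type]; rfl
    _ = ∑ p : (ι → κ) × κ, F p.1 := e.sum_comp fun p => F p.1
    _ = Fintype.card κ • ∑ x, F x := by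
        rw [Fintype.sum_prod_type, Finset.smul_sum]
        simp

section Trajectory

variable {E κ : Type*} {T : ℕ} {Φ : κ → E → E} {w : (Fin T → κ) → ℕ → E} {w0 : E}

theorem trajectory_eq_of_forall_lt_eq (hw0 : ∀ idx, w idx 0 = w0)
    (hrec : ∀ idx (t : Fin T), w idx ((t : ℕ) + 1) = Φ (idx t) (w idx t)) :
    ∀ s ≤ T, ∀ idx idx' : Fin T → κ, (∀ k : Fin T, (k : ℕ) < s → idx k = idx' k) →
      w idx s = w idx' s := by
  intro s
  induction s with
  | zero => intro _ idx idx' _; rw [hw0, hw0]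
  | succ s ih =>
    intro hs idx idx' hagree
    have hprev : w idx s = w idx' s :=
      ih (s.le_succ.trans hs) idx idx' fun k hk => hagree k (Nat.lt_succ_of_lt hk)
    have hcur : idx ⟨s, hs⟩ = idx' ⟨s, hs⟩ := hagree ⟨s, hs⟩ s.lt_succ_self
    rw [hrec idx ⟨s, hs⟩, hrec idx' ⟨s, hs⟩, hprev, hcur]

/-- The index drawn at step `t` is uniform and independent of the trajectory up to time `t`. -/
theorem sum_sum_trajectory_step [Fintype κ] {M : Type*} [AddCommMonoid M]
    (hw0 : ∀ idx, w idx 0 = w0)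
    (hrec : ∀ idx (t : Fin T), w idx ((t : ℕ) + 1) = Φ (idx t) (w idx t))
    (t : Fin T) (φ : E → M) :
    ∑ idx : Fin T → κ, ∑ j, φ (Φ j (w idx t))
      = Fintype.card κ • ∑ idx : Fin T → κ, φ (w idx ((t : ℕ) + 1)) := by
  rw [← Fintype.sum_sum_update t]
  refine Fintype.sum_congr _ _ fun idx => Fintype.sum_congr _ _ fun j => ?_
  have hpast : w (Function.update idx t j) t = w idx t :=
    trajectory_eq_of_forall_lt_eq hw0 hrec t t.is_lt.le _ _ fun k hk =>
      Function.update_of_ne (Fin.ne_of_lt hk) _ _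
  rw [hrec, hpast, Function.update_self]

theorem sum_trajectory_succ_le [Fintype κ] [Nonempty κ] (hw0 : ∀ idx, w idx 0 = w0)
    (hrec : ∀ idx (t : Fin T), w idx ((t : ℕ) + 1) = Φ (idx t) (w idx t)) {R D : E → ℝ} {c : ℝ}
    (hdrop : ∀ x, (Fintype.card κ : ℝ)⁻¹ * ∑ j, R (Φ j x) ≤ R x - D x + c) (t : Fin T) :
    ∑ idx : Fin T → κ, R (w idx ((t : ℕ) + 1))
      ≤ ∑ idx : Fin T → κ, R (w idx t) - ∑ idx : Fin T → κ, D (w idx t)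
        + (Fintype.card κ : ℝ) ^ T * c := by
  have hcard : (Fintype.card κ : ℝ) ≠ 0 := by positivity
  calc ∑ idx : Fin T → κ, R (w idx ((t : ℕ) + 1))
      = ∑ idx : Fin T → κ, (Fintype.card κ : ℝ)⁻¹ * ∑ j, R (Φ j (w idx t)) := by
        rw [← Finset.mul_sum, sum_sum_trajectory_step hw0 hrec, nsmul_eq_mul,
          inv_mul_cancel_left₀ hcard]
    _ ≤ ∑ idx : Fin T → κ, (R (w idx t) - D (w idx t) + c) :=
        Finset.sum_le_sum fun idx _ => hdrop _
    _ = _ := by simp [Finset.sum_add_distrib, Finset.sum_sub_distrib]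

end Trajectory

theorem exists_mul_le_of_telescoping {T : ℕ} {e p : ℕ → ℝ} {c m : ℝ}
    (hstep : ∀ s < T, e s ≤ p s - p (s + 1) + c) (hlast : e T ≤ p T - m + c) :
    ∃ t ≤ T, (T + 1) * e t ≤ p 0 - m + (T + 1) * c := by
  have hsum : ∑ s ∈ Finset.range (T + 1), e s ≤ p 0 - m + (T + 1) * c := by
    have htel : ∑ s ∈ Finset.range T, e s ≤ ∑ s ∈ Finset.range T, (p s - p (s + 1) + c) :=
      Finset.sum_le_sum fun s hs => hstep s (Finset.mem_range.mp hs)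
    rw [Finset.sum_add_distrib, Finset.sum_range_sub', Finset.sum_const, Finset.card_range,
      nsmul_eq_mul] at htel
    rw [Finset.sum_range_succ]
    linarith
  obtain ⟨t, ht, hmin⟩ := Finset.exists_min_image (Finset.range (T + 1)) e
    Finset.nonempty_range_add_one
  refine ⟨t, Nat.lt_succ_iff.mp (Finset.mem_range.mp ht), le_trans ?_ hsum⟩
  simpa using Finset.card_nsmul_le_sum _ _ _ hmin

theorem div_le_of_mul_le_add_mul {N E W K α : ℝ} {T : ℕ} (hN : 0 < N) (hα0 : 0 < α)
    (hα : α < 2) (hW : 0 ≤ W) (hK : 0 ≤ K)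
    (h : (T + 1) * (α * E) ≤ W + (T + 1) * (N * (K / 2))) :
    E / N ≤ W / N / ((T + 1) * (α - α ^ 2 / 2)) + K / (2 * α - α ^ 2) := by
  have hα' : 0 < α - α ^ 2 / 2 := by nlinarith
  calc E / N = (T + 1) * (α * E) / ((T + 1) * α * N) := by field_simp
    _ ≤ (W + (T + 1) * (N * (K / 2))) / ((T + 1) * α * N) := by gcongr
    _ = W / N / ((T + 1) * α) + K / (2 * α) := by field_simp
    _ ≤ W / N / ((T + 1) * (α - α ^ 2 / 2)) + K / (2 * (α - α ^ 2 / 2)) := by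
        gcongr <;> nlinarith
    _ = W / N / ((T + 1) * (α - α ^ 2 / 2)) + K / (2 * α - α ^ 2) := by ring_nf

theorem stmt_6_general {d n T : ℕ} (hn : 0 < n) {Z : Type*}
    (f : EuclideanSpace ℝ (Fin d) → Z → ℝ) (S : Fin n → Z)
    (L β α : ℝ)
    (hL : 0 < L) (hβ : 0 < β)
    (hα0 : 0 < α) (hα : α < 2)
    (hlip : ∀ i u v, |f u (S i) - f v (S i)| ≤ L * ‖u - v‖)
    (hdiff : ∀ i, Differentiable ℝ (fun v => f v (S i)))
    (hsm : ∀ i u v, ‖gradient (fun v => f v (S i)) u - gradient (fun v => f v (S i)) v‖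
      ≤ β * ‖u - v‖)
    (RS : EuclideanSpace ℝ (Fin d) → ℝ)
    (hRS : ∀ v, RS v = (1 / (n : ℝ)) * ∑ i, f v (S i))
    (wstar : EuclideanSpace ℝ (Fin d)) (hwstar : ∀ v, RS wstar ≤ RS v)
    (w0 : EuclideanSpace ℝ (Fin d))
    (w : (Fin T → Fin n) → ℕ → EuclideanSpace ℝ (Fin d))
    (hw0 : ∀ idx, w idx 0 = w0)
    (hrec : ∀ idx (t : Fin T),
      w idx ((t : ℕ) + 1) = w idx (t : ℕ)
        - α • gradient (fun v => f v (S (idx t))) (w idx (t : ℕ))) :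
    ∃ t ≤ T,
      (∑ idx : Fin T → Fin n, ‖gradient RS (w idx t)‖ ^ 2) / (n : ℝ) ^ T ≤
        ((∑ idx : Fin T → Fin n, (RS (w idx 0) - RS wstar)) / (n : ℝ) ^ T)
          / (((T : ℝ) + 1) * (α - α ^ 2 / 2))
        + β * α ^ 2 * L ^ 2 / (2 * α - α ^ 2) := by
  have : Nonempty (Fin n) := ⟨⟨0, hn⟩⟩
  set N : ℝ := (n : ℝ) ^ T
  set c : ℝ := β * α ^ 2 * L ^ 2 / 2
  have hdrop : ∀ x, (Fintype.card (Fin n) : ℝ)⁻¹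
      * ∑ j, RS (x - α • gradient (fun v => f v (S j)) x) ≤ RS x - α * ‖gradient RS x‖ ^ 2 + c :=
    inv_card_mul_sum_sgd_step_le (by simpa using hRS) hdiff hsm hβ.le
      (fun i => norm_gradient_le_of_lipschitz hL.le (hlip i)) α
  -- a virtual step from `w_T` cannot go below the minimum
  have hlow : ∀ x, RS wstar ≤ RS x - α * ‖gradient RS x‖ ^ 2 + c := by
    intro x
    refine le_trans ?_ (hdrop x)
    rw [le_inv_mul_iff₀ (by positivity)]
    simpa using Finset.card_nsmul_le_sum (Finset.univ : Finset (Fin n)) _ _ fun j _ =>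
      hwstar (x - α • gradient (fun v => f v (S j)) x)
  have hsum_const : ∀ r : ℝ, ∑ _idx : Fin T → Fin n, r = N * r := fun r => by simp [N]
  obtain ⟨t, htT, ht⟩ := exists_mul_le_of_telescoping (T := T) (c := N * c) (m := N * RS wstar)
    (e := fun s => ∑ idx : Fin T → Fin n, α * ‖gradient RS (w idx s)‖ ^ 2)
    (p := fun s => ∑ idx : Fin T → Fin n, RS (w idx s))
    (fun s hs => by
      have := sum_trajectory_succ_le hw0 hrec hdrop ⟨s, hs⟩
      simp only [Fintype.card_fin] at this
      linarith)
    (by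
      have := Finset.sum_le_sum fun idx (_ : idx ∈ Finset.univ) => hlow (w idx T)
      rw [Finset.sum_add_distrib, Finset.sum_sub_distrib, hsum_const, hsum_const] at this
      linarith)
  refine ⟨t, htT, div_le_of_mul_le_add_mul (by positivity) hα0 hα ?_ (by positivity) ?_⟩
  · exact Finset.sum_nonneg fun idx _ => sub_nonneg.mpr (hwstar _)
  · rwa [Finset.sum_sub_distrib, hsum_const, Finset.mul_sum]

/-- Convergence bound for plain SGM (no momentum) with constant learning rate
`0 < α < 2` on a smooth Lipschitz loss: bound on the minimum expected squared
gradient norm of the empirical risk. -/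
theorem stmt_6 {d n T : ℕ} (hn : 0 < n) (hT : 1 ≤ T) {Z : Type*}
    (f : EuclideanSpace ℝ (Fin d) → Z → ℝ) (S : Fin n → Z)
    (L β α : ℝ)
    (hL : 0 < L) (hβ : 0 < β)
    (hα0 : 0 < α) (hα : α < 2)
    (hlip : ∀ i u v, |f u (S i) - f v (S i)| ≤ L * ‖u - v‖)
    (hdiff : ∀ i, Differentiable ℝ (fun v => f v (S i)))
    (hsm : ∀ i u v, ‖gradient (fun v => f v (S i)) u - gradient (fun v => f v (S i)) v‖
      ≤ β * ‖u - v‖)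
    (RS : EuclideanSpace ℝ (Fin d) → ℝ)
    (hRS : ∀ v, RS v = (1 / (n : ℝ)) * ∑ i, f v (S i))
    (wstar : EuclideanSpace ℝ (Fin d)) (hwstar : ∀ v, RS wstar ≤ RS v)
    (w0 : EuclideanSpace ℝ (Fin d))
    (w : (Fin T → Fin n) → ℕ → EuclideanSpace ℝ (Fin d))
    (hw0 : ∀ idx, w idx 0 = w0)
    (hrec : ∀ idx (t : Fin T),
      w idx ((t : ℕ) + 1) = w idx (t : ℕ)
        - α • gradient (fun v => f v (S (idx t))) (w idx (t : ℕ))) :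
    ∃ t ≤ T,
      (∑ idx : Fin T → Fin n, ‖gradient RS (w idx t)‖ ^ 2) / (n : ℝ) ^ T ≤
        ((∑ idx : Fin T → Fin n, (RS (w idx 0) - RS wstar)) / (n : ℝ) ^ T)
          / (((T : ℝ) + 1) * (α - α ^ 2 / 2))
        + β * α ^ 2 * L ^ 2 / (2 * α - α ^ 2) :=
  stmt_6_general hn f S L β α hL hβ hα0 hα hlip hdiff hsm RS hRS wstar hwstar w0 w hw0 hrec
end

section
/- Let β > 0 and L > 0 satisfy L ≤ 2√(β/3) (equivalently L² ≤ 4β/3). Then the function g(μ) = (1 − μ)·( β + L²·μ²/(1 − μ²) ) is monotonically decreasing on the interval [0, 1). -/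
/-- If `L ≤ 2√(β/3)`, the factor `(1 − μ)(β + L²μ²/(1 − μ²))` appearing in
the non-vanishing term of the SGMM convergence bound is monotonically
decreasing in the momentum parameter `μ` on `[0, 1)`. -/
theorem stmt_7 (β L : ℝ) (hβ : 0 < β) (hL : 0 < L)
    (hLβ : L ≤ 2 * Real.sqrt (β / 3)) :
    StrictAntiOn (fun μ : ℝ => (1 - μ) * (β + L ^ 2 * μ ^ 2 / (1 - μ ^ 2)))
      (Set.Ico (0 : ℝ) 1) := by
  intro a ha b hb hab
  obtain ⟨ha0, ha1⟩ := ha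
  obtain ⟨hb0, hb1⟩ := hb
  have hL2 : L ^ 2 ≤ 4 * β / 3 := by
    nlinarith [Real.sq_sqrt (by linarith : (0:ℝ) ≤ β / 3), Real.sqrt_nonneg (β / 3)]
  have h1a : 0 < 1 + a := by linarith
  have h1b : 0 < 1 + b := by linarith
  have ha2 : (1 : ℝ) - a ^ 2 ≠ 0 := by nlinarith
  have hb2 : (1 : ℝ) - b ^ 2 ≠ 0 := by nlinarith
  have ea : (1 - a) * (β + L ^ 2 * a ^ 2 / (1 - a ^ 2))
      = β * (1 - a) + L ^ 2 * a ^ 2 / (1 + a) := by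
    field_simp
    ring
  have eb : (1 - b) * (β + L ^ 2 * b ^ 2 / (1 - b ^ 2))
      = β * (1 - b) + L ^ 2 * b ^ 2 / (1 + b) := by
    field_simp
    ring
  simp only
  rw [ea, eb]
  have hdiff : L ^ 2 * b ^ 2 / (1 + b) - L ^ 2 * a ^ 2 / (1 + a)
      = L ^ 2 * (b - a) * (a + b + a * b) / ((1 + a) * (1 + b)) := by
    field_simp
    ring
  have hkey : L ^ 2 * (b - a) * (a + b + a * b) / ((1 + a) * (1 + b)) < β * (b - a) := by
    rw [div_lt_iff₀ (by positivity)]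
    have hba : (0:ℝ) < b - a := sub_pos.mpr hab
    have hs : (0:ℝ) ≤ (b - a) * (a + b + a * b) := by positivity
    nlinarith [mul_le_mul_of_nonneg_right hL2 hs,
      mul_pos (mul_pos hba hβ) (show (0:ℝ) < 3 - a - b - a * b by nlinarith)]
  linarith [hdiff ▸ hkey]
end

section
/- Let Ω ⊂ ℝ^d be a nonempty compact convex set and P : ℝ^d → Ω the metric (closest-point) projection onto Ω. Let f : ℝ^d × Z → ℝ be such that for every z, f(·; z) is γ-strongly convex, β-smooth, and L-Lipschitz on Ω. Let S = (z_1,…,z_n) and S' = (z'_1,…,z'_n) be two datasets differing in at most one coordinate. Run projected SGMM with constant learning rate α and momentum μ on both datasets with the same index sequence: w_0 = w_{−1} = w'_0 = w'_{−1} ∈ Ω, w_{t+1} = P( w_t + μ(w_t − w_{t−1}) − α∇_w f(w_t; z_{i_t}) ), and similarly for w'_{t+1} with z'_{i_t}, where i_0,…,i_{T−1} are i.i.d. uniform on {1,…,n}. If α ≤ 2/(β+γ) and αβγ/(β+γ) − 1/2 ≤ μ < αβγ/(3(β+γ)), then for every z ∈ Z, E_A[ f(w_T; z) − f(w'_T;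 z) ] ≤ 2αL²(β+γ) / ( n·( αβγ − 3μ(β+γ) ) ); in particular SGMM is ε_s-uniformly stable with ε_s ≤ 2αL²(β+γ)/( n( αβγ − 3μ(β+γ) ) ). -/
/-!
Both runs use the same index sequence, so the gap `δ_t = ‖w_t - w'_t‖` can be followed path by
path. Strong convexity and smoothness make the gradient co-coercive, hence `x ↦ x - α ∇f x` is a
`(1 - ρ)`-contraction with `ρ = αβγ/(β+γ)`; the projection is non-expansive and the momentum term
adds `μ (δ_t + δ_{t-1})`. When the step draws the differing example (probability `1/n`) the two
updates differ by at most `2αL` more, because the Lipschitz bound on the convex set `Ω` controls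
`⟪∇f v, a - b⟫` for `v, a, b ∈ Ω`. Averaged over the index sequences,
`E δ_{t+1} ≤ (1 - ρ + μ) E δ_t + μ E δ_{t-1} + 2αL/n`, which keeps `E δ_t ≤ 2αL / (n (ρ - 2μ))`;
the Lipschitz bound turns this into the stability estimate.
-/

open scoped BigOperators RealInnerProductSpace
open Filter Set Topology

lemma le_of_hasDerivAt_of_le_mul {φ : ℝ → ℝ} {φ' C : ℝ} (hφ : HasDerivAt φ φ' 0)
    (h0 : φ 0 = 0) (hle : ∀ s ∈ Ioc (0 : ℝ) 1, φ s ≤ C * s) : φ' ≤ C := by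
  refine le_of_tendsto ((hasDerivAt_iff_tendsto_slope.mp hφ).mono_left (nhdsGT_le_nhdsNE 0)) ?_
  filter_upwards [Ioc_mem_nhdsGT zero_lt_one] with s hs
  rw [slope_def_field, h0, sub_zero, sub_zero, div_le_iff₀ hs.1]
  exact hle s hs

lemma le_of_sq_le_mul {x K : ℝ} (hx : 0 ≤ x) (hK : 0 ≤ K) (h : x ^ 2 ≤ K * x) : x ≤ K := by
  rcases hx.eq_or_lt with rfl | hx
  · exact hK
  · nlinarith

lemma mul_mul_div_add_le_half {α β γ : ℝ} (hβ : 0 < β) (hγ : 0 < γ) (hα : α ≤ 2 / (β + γ)) :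
    α * β * γ / (β + γ) ≤ 1 / 2 := by
  have hs : 0 < β + γ := by positivity
  rw [le_div_iff₀ hs] at hα
  rw [div_le_iff₀ hs]
  nlinarith [sq_nonneg (β - γ), mul_pos hβ hγ]

open Finset in
lemma sum_ite_apply_eq_div_pow {n T : ℕ} (k : Fin T) (j : Fin n) (c : ℝ) :
    (∑ idx : Fin T → Fin n, if idx k = j then c else 0) / (n : ℝ) ^ T = c / n := by
  have hcard : #{idx : Fin T → Fin n | idx k = j} = n ^ (T - 1) := by
    simpa using Fintype.card_filter_piFinset_const (univ : Finset (Fin n)) k j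
  have hn : (n : ℝ) ≠ 0 := by exact_mod_cast j.pos.ne'
  have hT : (n : ℝ) ^ T = n ^ (T - 1) * n := by rw [← pow_succ, Nat.sub_add_cancel k.pos]
  rw [sum_ite, sum_const_zero, add_zero, sum_const, hcard, nsmul_eq_mul, hT]
  push_cast
  field_simp

lemma le_of_two_step_recurrence {a : ℕ → ℝ} {p q c C : ℝ} {T : ℕ} (hp : 0 ≤ p) (hq : 0 ≤ q)
    (hC : p * C + q * C + c ≤ C) (h0 : a 0 ≤ C)
    (hstep : ∀ t < T, a (t + 1) ≤ p * a t + q * a (t - 1) + c) : ∀ t ≤ T, a t ≤ C := by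
  intro t
  induction t using Nat.strong_induction_on with
  | _ t ih =>
    rcases t with _ | t
    · exact fun _ => h0
    · intro ht
      have h1 := mul_le_mul_of_nonneg_left (ih t (by omega) (by omega)) hp
      have h2 := mul_le_mul_of_nonneg_left (ih (t - 1) (by omega) (by omega)) hq
      linarith [hstep t (by omega)]

section InnerProductSpace

variable {E : Type*} [NormedAddCommGroup E] [InnerProductSpace ℝ E]

lemma norm_sub_sq_le_mul_inner_of_pos {h : E → ℝ} {g : E → E} {c : ℝ} (hc : 0 < c)
    (hlower : ∀ u v, h v + ⟪g v, u - v⟫ ≤ h u)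
    (hupper : ∀ u v, h u ≤ h v + ⟪g v, u - v⟫ + c / 2 * ‖u - v‖ ^ 2) (u v : E) :
    ‖g u - g v‖ ^ 2 ≤ c * ⟪g u - g v, u - v⟫ := by
  have key (u v : E) : ‖g u - g v‖ ^ 2 ≤ 2 * c * (h u - h v - ⟪g v, u - v⟫) := by
    set Δ := g u - g v
    have h1 := hupper (u - c⁻¹ • Δ) u
    have h2 := hlower (u - c⁻¹ • Δ) v
    rw [sub_sub_cancel_left, norm_neg, norm_smul, inner_neg_right, real_inner_smul_right,
      Real.norm_of_nonneg (inv_nonneg.2 hc.le)] at h1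
    rw [sub_right_comm, inner_sub_right, real_inner_smul_right] at h2
    have hΔ : ⟪g u, Δ⟫ - ⟪g v, Δ⟫ = ‖Δ‖ ^ 2 := by
      rw [← inner_sub_left, real_inner_self_eq_norm_sq]
    have : ‖Δ‖ ^ 2 / (2 * c) = c⁻¹ * (⟪g u, Δ⟫ - ⟪g v, Δ⟫) - c / 2 * (c⁻¹ * ‖Δ‖) ^ 2 := by
      rw [hΔ]; field_simp; ring
    rw [← div_le_iff₀' (by positivity)]
    linarith
  have hsum : ⟪g u - g v, u - v⟫ = (h u - h v - ⟪g v, u - v⟫) + (h v - h u - ⟪g u, v - u⟫) := by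
    rw [inner_sub_left, ← neg_sub u v, inner_neg_right]; ring
  have := key u v
  have := key v u
  rw [norm_sub_rev] at this
  rw [hsum]
  linarith

lemma norm_sub_sq_le_mul_inner {h : E → ℝ} {g : E → E} {c : ℝ} (hc : 0 ≤ c)
    (hlower : ∀ u v, h v + ⟪g v, u - v⟫ ≤ h u)
    (hupper : ∀ u v, h u ≤ h v + ⟪g v, u - v⟫ + c / 2 * ‖u - v‖ ^ 2) (u v : E) :
    ‖g u - g v‖ ^ 2 ≤ c * ⟪g u - g v, u - v⟫ := by
  have hlim : Tendsto (fun ε => (c + ε) * ⟪g u - g v, u - v⟫) (𝓝[>] 0)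
      (𝓝 (c * ⟪g u - g v, u - v⟫)) := by
    exact ((by fun_prop : Continuous fun ε : ℝ => (c + ε) * ⟪g u - g v, u - v⟫).tendsto' 0 _
      (by simp)).mono_left nhdsWithin_le_nhds
  refine ge_of_tendsto hlim (eventually_nhdsWithin_of_forall fun ε (hε : 0 < ε) => ?_)
  refine norm_sub_sq_le_mul_inner_of_pos (by linarith) hlower (fun u v => ?_) u v
  have := hupper u v
  have : c / 2 * ‖u - v‖ ^ 2 ≤ (c + ε) / 2 * ‖u - v‖ ^ 2 := by gcongr; linarith
  linarith

lemma norm_sub_smul_le_of_cocoercive {α β γ : ℝ} (hβ : 0 < β) (hγ : 0 < γ) (hα0 : 0 ≤ α)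
    (hα : α ≤ 2 / (β + γ)) {x y : E}
    (hco : β * γ * ‖x‖ ^ 2 + ‖y‖ ^ 2 ≤ (β + γ) * ⟪y, x⟫) :
    ‖x - α • y‖ ≤ (1 - α * β * γ / (β + γ)) * ‖x‖ := by
  have hs : 0 < β + γ := by positivity
  set ρ := α * β * γ / (β + γ)
  have hρ : (β + γ) * ρ = α * β * γ := mul_div_cancel₀ _ hs.ne'
  have hαs : α * (β + γ) ≤ 2 := (le_div_iff₀ hs).1 hα
  have hρ2 := mul_mul_div_add_le_half hβ hγ hα
  rw [← pow_le_pow_iff_left₀ (norm_nonneg _) (by nlinarith [norm_nonneg x]) two_ne_zero,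
    norm_sub_sq_real, real_inner_smul_right, norm_smul, mul_pow, Real.norm_eq_abs, sq_abs,
    real_inner_comm]
  have hco' := mul_le_mul_of_nonneg_left hco (by positivity : 0 ≤ 2 * α)
  have hG : 0 ≤ α * ‖y‖ ^ 2 * (2 - α * (β + γ)) := by
    have := sq_nonneg ‖y‖
    have : 0 ≤ 2 - α * (β + γ) := by linarith
    positivity
  refine le_of_mul_le_mul_left ?_ hs
  nlinarith [mul_nonneg hs.le (mul_nonneg (sq_nonneg ρ) (sq_nonneg ‖x‖))]

def IsMetricProjection (Ω : Set E) (P : E → E) : Prop :=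
  ∀ x, P x ∈ Ω ∧ ∀ y ∈ Ω, ‖x - P x‖ ≤ ‖x - y‖

namespace IsMetricProjection

variable {Ω : Set E} {P : E → E}

lemma inner_sub_le_zero (hP : IsMetricProjection Ω P) (hΩ : Convex ℝ Ω) (x : E) {y : E}
    (hy : y ∈ Ω) : ⟪x - P x, y - P x⟫ ≤ 0 := by
  have : Nonempty Ω := ⟨⟨P x, (hP x).1⟩⟩
  refine (norm_eq_iInf_iff_real_inner_le_zero hΩ (hP x).1).1 (le_antisymm ?_ ?_) y hy
  · exact le_ciInf fun w => (hP x).2 w w.2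
  · exact ciInf_le (f := fun w : Ω => ‖x - w‖) ⟨0, forall_mem_range.2 fun _ => norm_nonneg _⟩
      ⟨P x, (hP x).1⟩

lemma norm_sub_sq_le_inner (hP : IsMetricProjection Ω P) (hΩ : Convex ℝ Ω) (x y : E) :
    ‖P x - P y‖ ^ 2 ≤ ⟪x - y, P x - P y⟫ := by
  have hx := hP.inner_sub_le_zero hΩ x (hP y).1
  have hy := hP.inner_sub_le_zero hΩ y (hP x).1
  rw [← neg_sub (P x) (P y), inner_neg_right] at hx
  have : ⟪x - y, P x - P y⟫ - ‖P x - P y‖ ^ 2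
      = ⟪x - P x, P x - P y⟫ - ⟪y - P y, P x - P y⟫ := by
    rw [← real_inner_self_eq_norm_sq, ← inner_sub_left, ← inner_sub_left]
    congr 1
    abel
  linarith

lemma norm_sub_le (hP : IsMetricProjection Ω P) (hΩ : Convex ℝ Ω) (x y : E) :
    ‖P x - P y‖ ≤ ‖x - y‖ :=
  le_of_sq_le_mul (norm_nonneg _) (norm_nonneg _)
    ((hP.norm_sub_sq_le_inner hΩ x y).trans (real_inner_le_norm _ _))

lemma norm_sub_smul_sub_sub_smul_le (hP : IsMetricProjection Ω P) (hΩ : Convex ℝ Ω) {α L : ℝ}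
    (hα : 0 ≤ α) (hL : 0 ≤ L) (m : E) {a b : E}
    (ha : ∀ x ∈ Ω, ∀ y ∈ Ω, ⟪a, x - y⟫ ≤ L * ‖x - y‖)
    (hb : ∀ x ∈ Ω, ∀ y ∈ Ω, ⟪b, x - y⟫ ≤ L * ‖x - y‖) :
    ‖P (m - α • a) - P (m - α • b)‖ ≤ 2 * α * L := by
  set p := P (m - α • a)
  set q := P (m - α • b)
  have hp : p ∈ Ω := (hP _).1
  have hq : q ∈ Ω := (hP _).1
  have key := hP.norm_sub_sq_le_inner hΩ (m - α • a) (m - α • b)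
  have e : ⟪m - α • a - (m - α • b), p - q⟫ = α * (⟪b, p - q⟫ + ⟪a, q - p⟫) := by
    rw [sub_sub_sub_cancel_left, ← smul_sub, real_inner_smul_left, inner_sub_left,
      ← neg_sub p q, inner_neg_right]
    ring
  refine le_of_sq_le_mul (norm_nonneg _) (by positivity) ?_
  calc ‖p - q‖ ^ 2 ≤ α * (⟪b, p - q⟫ + ⟪a, q - p⟫) := e ▸ key
    _ ≤ α * (L * ‖p - q‖ + L * ‖q - p‖) := by gcongr <;> [exact hb p hp q hq; exact ha q hq p hp]
    _ = 2 * α * L * ‖p - q‖ := by rw [norm_sub_rev q p]; ring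

end IsMetricProjection

section Gradient

variable [CompleteSpace E]

lemma hasDerivAt_comp_add_smul {f : E → ℝ} (hf : Differentiable ℝ f) (v d : E) (t : ℝ) :
    HasDerivAt (fun s : ℝ => f (v + s • d)) ⟪gradient f (v + t • d), d⟫ t := by
  have hline : HasDerivAt (fun s : ℝ => v + s • d) d t := by
    simpa using ((hasDerivAt_id t).smul_const d).const_add v
  simpa [Function.comp_def] using
    (hf (v + t • d)).hasGradientAt.hasFDerivAt.comp_hasDerivAt t hline

lemma inner_gradient_sub_le_of_lipschitz {Ω : Set E} (hΩ : Convex ℝ Ω) {f : E → ℝ} {L : ℝ}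
    (hf : Differentiable ℝ f) (hlip : ∀ u ∈ Ω, ∀ v ∈ Ω, |f u - f v| ≤ L * ‖u - v‖)
    {v a b : E} (hv : v ∈ Ω) (ha : a ∈ Ω) (hb : b ∈ Ω) :
    ⟪gradient f v, a - b⟫ ≤ L * ‖a - b‖ := by
  have hφ : HasDerivAt (fun s : ℝ => f (v + s • (a - v)) - f (v + s • (b - v)))
      ⟪gradient f v, a - b⟫ 0 := by
    have := (hasDerivAt_comp_add_smul hf v (a - v) 0).sub (hasDerivAt_comp_add_smul hf v (b - v) 0)
    simp only [zero_smul, add_zero, ← inner_sub_right, sub_sub_sub_cancel_right] at this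
    exact this
  refine le_of_hasDerivAt_of_le_mul hφ (by simp) fun s hs => ?_
  have hmem (c : E) (hc : c ∈ Ω) : v + s • (c - v) ∈ Ω :=
    hΩ.add_smul_sub_mem hv hc ⟨hs.1.le, hs.2⟩
  calc f (v + s • (a - v)) - f (v + s • (b - v))
      ≤ L * ‖(v + s • (a - v)) - (v + s • (b - v))‖ :=
        (le_abs_self _).trans (hlip _ (hmem a ha) _ (hmem b hb))
    _ = L * ‖a - b‖ * s := by
        rw [add_sub_add_left_eq_sub, ← smul_sub, sub_sub_sub_cancel_right, norm_smul,
          Real.norm_of_nonneg hs.1.le]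
        ring

lemma le_add_inner_gradient_add_half_mul_sq {f : E → ℝ} {β : ℝ} (hf : Differentiable ℝ f)
    (hsm : ∀ u v, ‖gradient f u - gradient f v‖ ≤ β * ‖u - v‖) (u v : E) :
    f u ≤ f v + ⟪gradient f v, u - v⟫ + β / 2 * ‖u - v‖ ^ 2 := by
  set d := u - v
  let ψ : ℝ → ℝ := fun s => f (v + s • d) - s * ⟪gradient f v, d⟫ - β / 2 * s ^ 2 * ‖d‖ ^ 2
  have hψ (s : ℝ) : HasDerivAt ψ
      (⟪gradient f (v + s • d), d⟫ - ⟪gradient f v, d⟫ - β * s * ‖d‖ ^ 2) s := by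
    refine (((hasDerivAt_comp_add_smul hf v d s).sub ((hasDerivAt_id s).mul_const _)).sub
      (((hasDerivAt_pow 2 s).const_mul (β / 2)).mul_const (‖d‖ ^ 2))).congr_deriv ?_
    simp only [one_mul]
    ring
  have hanti : AntitoneOn ψ (Ici 0) := by
    refine antitoneOn_of_hasDerivWithinAt_nonpos (convex_Ici 0)
      (fun s _ => (hψ s).continuousAt.continuousWithinAt) (fun s _ => (hψ s).hasDerivWithinAt)
      fun s hs => ?_
    rw [interior_Ici, mem_Ioi] at hs
    have := hsm (v + s • d) v
    rw [add_sub_cancel_left, norm_smul, Real.norm_of_nonneg hs.le] at this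
    rw [sub_nonpos, ← inner_sub_left]
    calc ⟪gradient f (v + s • d) - gradient f v, d⟫
        ≤ ‖gradient f (v + s • d) - gradient f v‖ * ‖d‖ := real_inner_le_norm _ _
      _ ≤ β * (s * ‖d‖) * ‖d‖ := by gcongr
      _ = β * s * ‖d‖ ^ 2 := by ring
  have := hanti self_mem_Ici (zero_le_one' ℝ) zero_le_one
  simp only [ψ, d, one_smul, zero_smul, add_zero, add_sub_cancel, one_mul, one_pow, zero_mul,
    sub_zero, zero_pow two_ne_zero, mul_zero] at this
  linarith

lemma cocoercive_of_strongConvex_of_lipschitz_gradient {f : E → ℝ} {β γ : ℝ}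
    (hf : Differentiable ℝ f)
    (hsc : ∀ u v, f u ≥ f v + ⟪gradient f v, u - v⟫ + (γ / 2) * ‖u - v‖ ^ 2)
    (hsm : ∀ u v, ‖gradient f u - gradient f v‖ ≤ β * ‖u - v‖) (u v : E) :
    β * γ * ‖u - v‖ ^ 2 + ‖gradient f u - gradient f v‖ ^ 2
      ≤ (β + γ) * ⟪gradient f u - gradient f v, u - v⟫ := by
  rcases eq_or_ne u v with rfl | huv
  · simp
  have hγβ : γ ≤ β := by
    have := hsc u v
    have := le_add_inner_gradient_add_half_mul_sq hf hsm u v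
    have : 0 < ‖u - v‖ ^ 2 := by positivity [sub_ne_zero.2 huv]
    nlinarith
  -- `f - (γ/2)‖·‖²` is convex and has a quadratic upper bound with constant `β - γ`.
  have hsq (u v : E) : ‖u‖ ^ 2 = ‖v‖ ^ 2 + 2 * ⟪v, u - v⟫ + ‖u - v‖ ^ 2 := by
    rw [← norm_add_sq_real, add_sub_cancel]
  have hg (u v : E) : ⟪gradient f v - γ • v, u - v⟫ = ⟪gradient f v, u - v⟫ - γ * ⟪v, u - v⟫ := by
    rw [inner_sub_left, real_inner_smul_left]
  have hco := norm_sub_sq_le_mul_inner (h := fun x => f x - γ / 2 * ‖x‖ ^ 2)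
    (g := fun x => gradient f x - γ • x) (sub_nonneg.2 hγβ)
    (fun u v => by have := hsc u v; rw [hg, hsq u v]; linarith)
    (fun u v => by
      have := le_add_inner_gradient_add_half_mul_sq hf hsm u v
      rw [hg, hsq u v]; linarith) u v
  have e : gradient f u - γ • u - (gradient f v - γ • v)
      = (gradient f u - gradient f v) - γ • (u - v) := by
    rw [smul_sub]; abel
  rw [e] at hco
  generalize gradient f u - gradient f v = G at hco ⊢
  generalize u - v = D at hco ⊢
  rw [norm_sub_sq_real, inner_sub_left, real_inner_smul_left, real_inner_smul_right, norm_smul,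
    mul_pow, Real.norm_eq_abs, sq_abs, real_inner_self_eq_norm_sq] at hco
  linarith

end Gradient

def sgmmStep (P : E → E) (α μ : ℝ) (g : E → E) (w wprev : E) : E :=
  P (w + μ • (w - wprev) - α • g w)

section SGMM

variable {Ω : Set E} {P : E → E} {Z : Type*} {g : Z → E → E} {α μ r L : ℝ} {T : ℕ}

lemma norm_sgmmStep_sub_le (hP : IsMetricProjection Ω P) (hΩ : Convex ℝ Ω) (hμ : 0 ≤ μ)
    {h : E → E} {w v wp vp : E} (hh : ‖(w - v) - α • (h w - h v)‖ ≤ r * ‖w - v‖) :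
    ‖sgmmStep P α μ h w wp - sgmmStep P α μ h v vp‖ ≤ (r + μ) * ‖w - v‖ + μ * ‖wp - vp‖ := by
  refine (hP.norm_sub_le hΩ _ _).trans ?_
  have e : w + μ • (w - wp) - α • h w - (v + μ • (v - vp) - α • h v)
      = ((w - v) - α • (h w - h v)) + μ • ((w - v) - (wp - vp)) := by module
  rw [e]
  calc _ ≤ ‖(w - v) - α • (h w - h v)‖ + ‖μ • ((w - v) - (wp - vp))‖ := norm_add_le _ _
    _ ≤ r * ‖w - v‖ + μ * (‖w - v‖ + ‖wp - vp‖) := by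
        rw [norm_smul, Real.norm_of_nonneg hμ]
        gcongr
        exact norm_sub_le _ _
    _ = _ := by ring

lemma sgmm_mem {w : ℕ → E} {z : Fin T → Z} (hP : IsMetricProjection Ω P) (hw0 : w 0 ∈ Ω)
    (hrec : ∀ t : Fin T, w (t + 1) = sgmmStep P α μ (g (z t)) (w t) (w (t - 1))) :
    ∀ t ≤ T, w t ∈ Ω
  | 0, _ => hw0
  | t + 1, ht => hrec ⟨t, ht⟩ ▸ (hP _).1

open Classical in
lemma norm_sgmm_succ_sub_le {w w' : ℕ → E} {z z' : Fin T → Z} (hP : IsMetricProjection Ω P)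
    (hΩ : Convex ℝ Ω) (hα : 0 ≤ α) (hμ : 0 ≤ μ) (hL : 0 ≤ L)
    (hcontr : ∀ z u v, ‖(u - v) - α • (g z u - g z v)‖ ≤ r * ‖u - v‖)
    (hdir : ∀ z, ∀ v ∈ Ω, ∀ a ∈ Ω, ∀ b ∈ Ω, ⟪g z v, a - b⟫ ≤ L * ‖a - b‖)
    (hw'0 : w' 0 ∈ Ω)
    (hrec : ∀ t : Fin T, w (t + 1) = sgmmStep P α μ (g (z t)) (w t) (w (t - 1)))
    (hrec' : ∀ t : Fin T, w' (t + 1) = sgmmStep P α μ (g (z' t)) (w' t) (w' (t - 1)))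
    (t : Fin T) :
    ‖w (t + 1) - w' (t + 1)‖ ≤ (r + μ) * ‖w t - w' t‖ + μ * ‖w (t - 1) - w' (t - 1)‖
      + if z t = z' t then 0 else 2 * α * L := by
  rw [hrec t, hrec' t]
  split_ifs with h
  · rw [h, add_zero]
    exact norm_sgmmStep_sub_le hP hΩ hμ (hcontr _ _ _)
  · have hv := sgmm_mem hP hw'0 hrec' t t.2.le
    exact (norm_sub_le_norm_sub_add_norm_sub _
      (sgmmStep P α μ (g (z t)) (w' t) (w' (t - 1))) _).trans
      (add_le_add (norm_sgmmStep_sub_le hP hΩ hμ (hcontr _ _ _))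
        (hP.norm_sub_smul_sub_sub_smul_le hΩ hα hL _ (hdir _ _ hv) (hdir _ _ hv)))

theorem sgmm_average_norm_sub_le {n : ℕ} (hP : IsMetricProjection Ω P) (hΩ : Convex ℝ Ω)
    (hα : 0 ≤ α) (hμ : 0 ≤ μ) (hL : 0 ≤ L) (hr : 0 ≤ r) (hr2μ : r + 2 * μ < 1)
    (hcontr : ∀ z u v, ‖(u - v) - α • (g z u - g z v)‖ ≤ r * ‖u - v‖)
    (hdir : ∀ z, ∀ v ∈ Ω, ∀ a ∈ Ω, ∀ b ∈ Ω, ⟪g z v, a - b⟫ ≤ L * ‖a - b‖)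
    {S S' : Fin n → Z} {j : Fin n} (hj : ∀ i, i ≠ j → S i = S' i)
    {w0 : E} (hw0Ω : w0 ∈ Ω) {w w' : (Fin T → Fin n) → ℕ → E}
    (hw0 : ∀ idx, w idx 0 = w0) (hw'0 : ∀ idx, w' idx 0 = w0)
    (hrec : ∀ idx (t : Fin T),
      w idx (t + 1) = sgmmStep P α μ (g (S (idx t))) (w idx t) (w idx (t - 1)))
    (hrec' : ∀ idx (t : Fin T),
      w' idx (t + 1) = sgmmStep P α μ (g (S' (idx t))) (w' idx t) (w' idx (t - 1))) :
    ∀ t ≤ T, (∑ idx : Fin T → Fin n, ‖w idx t - w' idx t‖) / (n : ℝ) ^ T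
      ≤ 2 * α * L / (n * (1 - r - 2 * μ)) := by
  have hn : (n : ℝ) ≠ 0 := by exact_mod_cast j.pos.ne'
  have hκ : 0 < 1 - r - 2 * μ := by linarith
  have hC : 2 * α * L / n = (1 - r - 2 * μ) * (2 * α * L / (n * (1 - r - 2 * μ))) := by
    field_simp
  refine le_of_two_step_recurrence (p := r + μ) (q := μ) (c := 2 * α * L / n) (by positivity) hμ
    (by linarith) (by
      simp only [hw0, hw'0, sub_self, norm_zero, Finset.sum_const_zero, zero_div]
      exact div_nonneg (by positivity) (mul_nonneg n.cast_nonneg hκ.le))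
    fun t ht => ?_
  calc (∑ idx : Fin T → Fin n, ‖w idx (t + 1) - w' idx (t + 1)‖) / (n : ℝ) ^ T
      ≤ (∑ idx : Fin T → Fin n, ((r + μ) * ‖w idx t - w' idx t‖
          + μ * ‖w idx (t - 1) - w' idx (t - 1)‖
          + if idx ⟨t, ht⟩ = j then 2 * α * L else 0)) / (n : ℝ) ^ T := by
        gcongr with idx
        refine (norm_sgmm_succ_sub_le (z := fun t => S (idx t)) (z' := fun t => S' (idx t))
          hP hΩ hα hμ hL hcontr hdir ((hw'0 idx).symm ▸ hw0Ω) (hrec idx) (hrec' idx)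
          ⟨t, ht⟩).trans ?_
        gcongr
        by_cases h : idx ⟨t, ht⟩ = j
        · rw [if_pos h]
          split_ifs <;> linarith [mul_nonneg (mul_nonneg zero_le_two hα) hL]
        · rw [if_neg h, if_pos (hj _ h)]
    _ = (r + μ) * ((∑ idx : Fin T → Fin n, ‖w idx t - w' idx t‖) / (n : ℝ) ^ T)
          + μ * ((∑ idx : Fin T → Fin n, ‖w idx (t - 1) - w' idx (t - 1)‖) / (n : ℝ) ^ T)
          + 2 * α * L / n := by
        simp only [Finset.sum_add_distrib, ← Finset.mul_sum, add_div, mul_div_assoc,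
          sum_ite_apply_eq_div_pow]

end SGMM

end InnerProductSpace

/-- Natural-number subtraction encodes the convention `w_{-1} = w_0`. -/
theorem stmt_8_general {d n T : ℕ} {Z : Type*}
    (Ω : Set (EuclideanSpace ℝ (Fin d)))
    (hΩconv : Convex ℝ Ω)
    (P : EuclideanSpace ℝ (Fin d) → EuclideanSpace ℝ (Fin d))
    (hP : ∀ x, P x ∈ Ω ∧ ∀ y ∈ Ω, ‖x - P x‖ ≤ ‖x - y‖)
    (f : EuclideanSpace ℝ (Fin d) → Z → ℝ)
    (L β γ α μ : ℝ) (hL : 0 < L) (hβ : 0 < β) (hγ : 0 < γ) (hα0 : 0 < α) (hμ0 : 0 ≤ μ)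
    (hdiff : ∀ z, Differentiable ℝ (fun v => f v z))
    (hsc : ∀ z u v, f u z ≥ f v z + ⟪gradient (fun x => f x z) v, u - v⟫
      + (γ / 2) * ‖u - v‖ ^ 2)
    (hsm : ∀ z u v, ‖gradient (fun x => f x z) u - gradient (fun x => f x z) v‖
      ≤ β * ‖u - v‖)
    (hlip : ∀ z, ∀ u ∈ Ω, ∀ v ∈ Ω, |f u z - f v z| ≤ L * ‖u - v‖)
    (S S' : Fin n → Z) (hSS' : ∃ j, ∀ i, i ≠ j → S i = S' i)
    (hα : α ≤ 2 / (β + γ))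
    (hμub : μ < α * β * γ / (3 * (β + γ)))
    (w0 : EuclideanSpace ℝ (Fin d)) (hw0Ω : w0 ∈ Ω)
    (w w' : (Fin T → Fin n) → ℕ → EuclideanSpace ℝ (Fin d))
    (hw0 : ∀ idx, w idx 0 = w0) (hw'0 : ∀ idx, w' idx 0 = w0)
    (hrec : ∀ idx (t : Fin T),
      w idx ((t : ℕ) + 1) = P (w idx (t : ℕ)
        + μ • (w idx (t : ℕ) - w idx ((t : ℕ) - 1))
        - α • gradient (fun v => f v (S (idx t))) (w idx (t : ℕ))))
    (hrec' : ∀ idx (t : Fin T),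
      w' idx ((t : ℕ) + 1) = P (w' idx (t : ℕ)
        + μ • (w' idx (t : ℕ) - w' idx ((t : ℕ) - 1))
        - α • gradient (fun v => f v (S' (idx t))) (w' idx (t : ℕ)))) :
    ∀ z : Z,
      (∑ idx : Fin T → Fin n, (f (w idx T) z - f (w' idx T) z)) / (n : ℝ) ^ T ≤
        2 * α * L ^ 2 * (β + γ) / ((n : ℝ) * (α * β * γ - 3 * μ * (β + γ))) := by
  intro z
  obtain ⟨j, hj⟩ := hSS'
  set ρ := α * β * γ / (β + γ)
  have hρ : ρ ≤ 1 / 2 := mul_mul_div_add_le_half hβ hγ hα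
  have hκ : α * β * γ - 3 * μ * (β + γ) = (β + γ) * (ρ - 3 * μ) := by simp only [ρ]; field_simp
  have hρμ : 0 < ρ - 3 * μ := by
    rw [lt_div_iff₀ (by positivity)] at hμub
    exact pos_of_mul_pos_right (a := β + γ) (by linarith) (by positivity)
  have hdist := sgmm_average_norm_sub_le hP hΩconv hα0.le hμ0 hL.le (by linarith) (by linarith)
    (fun z u v => norm_sub_smul_le_of_cocoercive hβ hγ hα0.le hα
      (cocoercive_of_strongConvex_of_lipschitz_gradient (hdiff z) (hsc z) (hsm z) u v))
    (fun z v hv a ha b hb => inner_gradient_sub_le_of_lipschitz hΩconv (hdiff z) (hlip z) hv ha hb)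
    hj hw0Ω hw0 hw'0 hrec hrec' T le_rfl
  calc (∑ idx : Fin T → Fin n, (f (w idx T) z - f (w' idx T) z)) / (n : ℝ) ^ T
      ≤ L * ((∑ idx : Fin T → Fin n, ‖w idx T - w' idx T‖) / (n : ℝ) ^ T) := by
        rw [mul_div_assoc', Finset.mul_sum]
        gcongr with idx
        exact (le_abs_self _).trans <| hlip z
          _ (sgmm_mem hP ((hw0 idx).symm ▸ hw0Ω) (hrec idx) T le_rfl)
          _ (sgmm_mem hP ((hw'0 idx).symm ▸ hw0Ω) (hrec' idx) T le_rfl)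
    _ ≤ L * (2 * α * L / (n * (ρ - 3 * μ))) := by
        refine mul_le_mul_of_nonneg_left (hdist.trans ?_) hL.le
        exact div_le_div_of_nonneg_left (by positivity) (mul_pos (by exact_mod_cast j.pos) hρμ)
          (mul_le_mul_of_nonneg_left (by linarith) n.cast_nonneg)
    _ = _ := by rw [hκ]; field_simp

/-- Uniform stability of projected SGMM for strongly convex, smooth losses
that are Lipschitz on the compact convex parameter set `Ω`.  Natural-number
subtraction encodes the convention `w_{-1} = w_0`. -/
theorem stmt_8 {d n T : ℕ} (hn : 0 < n) {Z : Type*}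
    (Ω : Set (EuclideanSpace ℝ (Fin d))) (hΩne : Ω.Nonempty)
    (hΩc : IsCompact Ω) (hΩconv : Convex ℝ Ω)
    (P : EuclideanSpace ℝ (Fin d) → EuclideanSpace ℝ (Fin d))
    (hP : ∀ x, P x ∈ Ω ∧ ∀ y ∈ Ω, ‖x - P x‖ ≤ ‖x - y‖)
    (f : EuclideanSpace ℝ (Fin d) → Z → ℝ)
    (L β γ α μ : ℝ) (hL : 0 < L) (hβ : 0 < β) (hγ : 0 < γ) (hα0 : 0 < α) (hμ0 : 0 ≤ μ)
    (hdiff : ∀ z, Differentiable ℝ (fun v => f v z))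
    (hsc : ∀ z u v, f u z ≥ f v z + ⟪gradient (fun x => f x z) v, u - v⟫
      + (γ / 2) * ‖u - v‖ ^ 2)
    (hsm : ∀ z u v, ‖gradient (fun x => f x z) u - gradient (fun x => f x z) v‖
      ≤ β * ‖u - v‖)
    (hlip : ∀ z, ∀ u ∈ Ω, ∀ v ∈ Ω, |f u z - f v z| ≤ L * ‖u - v‖)
    (S S' : Fin n → Z) (hSS' : ∃ j, ∀ i, i ≠ j → S i = S' i)
    (hα : α ≤ 2 / (β + γ))
    (hμlb : α * β * γ / (β + γ) - 1 / 2 ≤ μ)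
    (hμub : μ < α * β * γ / (3 * (β + γ)))
    (w0 : EuclideanSpace ℝ (Fin d)) (hw0Ω : w0 ∈ Ω)
    (w w' : (Fin T → Fin n) → ℕ → EuclideanSpace ℝ (Fin d))
    (hw0 : ∀ idx, w idx 0 = w0) (hw'0 : ∀ idx, w' idx 0 = w0)
    (hrec : ∀ idx (t : Fin T),
      w idx ((t : ℕ) + 1) = P (w idx (t : ℕ)
        + μ • (w idx (t : ℕ) - w idx ((t : ℕ) - 1))
        - α • gradient (fun v => f v (S (idx t))) (w idx (t : ℕ))))
    (hrec' : ∀ idx (t : Fin T),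
      w' idx ((t : ℕ) + 1) = P (w' idx (t : ℕ)
        + μ • (w' idx (t : ℕ) - w' idx ((t : ℕ) - 1))
        - α • gradient (fun v => f v (S' (idx t))) (w' idx (t : ℕ)))) :
    ∀ z : Z,
      (∑ idx : Fin T → Fin n, (f (w idx T) z - f (w' idx T) z)) / (n : ℝ) ^ T ≤
        2 * α * L ^ 2 * (β + γ) / ((n : ℝ) * (α * β * γ - 3 * μ * (β + γ))) :=
  stmt_8_general Ω hΩconv P hP f L β γ α μ hL hβ hγ hα0 hμ0 hdiff hsc hsm hlip S S' hSS' hα hμub w0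
    hw0Ω w w' hw0 hw'0 hrec hrec'
end

section
/- Let μ > 0 be a real number and let t̃, t_d be integers with 1 ≤ t̃ < t_d. Then Σ_{t = t̃+1}^{t_d} exp(2μ(t_d − t))/t ≤ exp(2μ(t_d − t̃))·ln(1 + 1/(2μ·t̃)) − (1/2)·ln(1 + 1/(μ·t_d)). -/
/-!
With `c = 2μ` the sum is `exp (c t_d) · Σ exp (-c t) / t`. The classical upper bound
`B x = exp (-x) · log (1 + 1/x)` of the exponential integral `E₁` decreases at least as fast
as `E₁` does: `B' x ≤ -exp (-x) / x`, because `log (1 + 1/x) ≥ 1/(x + 1)`. By the mean value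
theorem each term `exp (-c k) / k` is therefore at most `B (c (k - 1)) - B (c k)`, so the sum
telescopes to at most `B (c t̃) - B (c t_d)`; the last term is then weakened by
`log (1 + 2y) ≤ 2 log (1 + y)`.
-/

open Real Finset

noncomputable def expIntegralBound (x : ℝ) : ℝ := exp (-x) * log (1 + 1 / x)

lemma one_div_add_one_le_log_one_add_one_div {x : ℝ} (hx : 0 < x) :
    1 / (x + 1) ≤ log (1 + 1 / x) := by
  have h := one_sub_inv_le_log_of_pos (show 0 < 1 + 1 / x by positivity)
  have : 1 - (1 + 1 / x)⁻¹ = 1 / (x + 1) := by field_simp; ring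
  rwa [this] at h

lemma log_one_add_two_mul_le {y : ℝ} (hy : 0 ≤ y) : log (1 + 2 * y) ≤ 2 * log (1 + y) := by
  rw [← Nat.cast_ofNat, ← log_pow]
  exact log_le_log (by positivity) (by push_cast; nlinarith [sq_nonneg y])

lemma hasDerivAt_expIntegralBound {x : ℝ} (hx : 0 < x) :
    HasDerivAt expIntegralBound (-(exp (-x) * (log (1 + 1 / x) + 1 / (x * (x + 1))))) x := by
  have hexp : HasDerivAt (fun s => exp (-s)) (-exp (-x)) x := by
    simpa using (hasDerivAt_neg x).exp
  have hinv : HasDerivAt (fun s => 1 + 1 / s) (-(x ^ 2)⁻¹) x := by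
    simpa [one_div] using (hasDerivAt_inv hx.ne').const_add 1
  refine (hexp.mul (hinv.log (by positivity))).congr_deriv ?_
  field_simp
  ring

lemma deriv_expIntegralBound_le {x : ℝ} (hx : 0 < x) :
    deriv expIntegralBound x ≤ -(exp (-x) / x) := by
  have hlog := one_div_add_one_le_log_one_add_one_div hx
  have hsplit : 1 / (x + 1) + 1 / (x * (x + 1)) = 1 / x := by field_simp
  rw [(hasDerivAt_expIntegralBound hx).deriv, neg_le_neg_iff, div_eq_mul_one_div]
  gcongr
  linarith

lemma sub_mul_exp_div_le_expIntegralBound_sub {c a b : ℝ} (hc : 0 < c) (ha : 0 < a)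
    (hab : a ≤ b) :
    (b - a) * (exp (-(c * b)) / b) ≤ expIntegralBound (c * a) - expIntegralBound (c * b) := by
  have hdiff : ∀ s ∈ Set.Icc a b, DifferentiableAt ℝ (fun s => expIntegralBound (c * s)) s :=
    fun s hs => (hasDerivAt_expIntegralBound (mul_pos hc (ha.trans_le hs.1))).differentiableAt.comp
      s (differentiableAt_id.const_mul c)
  have hslope : ∀ s ∈ interior (Set.Icc a b),
      deriv (fun s => expIntegralBound (c * s)) s ≤ -(exp (-(c * b)) / b) := by
    intro s hs
    rw [interior_Icc] at hs
    have hs0 : 0 < s := ha.trans hs.1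
    calc deriv (fun s => expIntegralBound (c * s)) s
        = c * deriv expIntegralBound (c * s) := deriv_comp_mul_left c expIntegralBound s
      _ ≤ c * -(exp (-(c * s)) / (c * s)) := by
          gcongr
          exact deriv_expIntegralBound_le (by positivity)
      _ = -(exp (-(c * s)) / s) := by field_simp
      _ ≤ -(exp (-(c * b)) / b) := by
          have hsb := hs.2.le
          rw [neg_le_neg_iff]
          gcongr
  have := (convex_Icc a b).image_sub_le_mul_sub_of_deriv_le
    (fun s hs => (hdiff s hs).continuousAt.continuousWithinAt)
    (fun s hs => (hdiff s (interior_subset hs)).differentiableWithinAt) hslope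
    a (Set.left_mem_Icc.2 hab) b (Set.right_mem_Icc.2 hab) hab
  linarith

lemma sum_Icc_le_sub_of_le_sub {f g : ℕ → ℝ} {m n : ℕ} (hmn : m ≤ n)
    (h : ∀ k ∈ Ico m n, g (k + 1) ≤ f k - f (k + 1)) :
    ∑ k ∈ Icc (m + 1) n, g k ≤ f m - f n :=
  calc ∑ k ∈ Icc (m + 1) n, g k = ∑ k ∈ Ico m n, g (k + 1) := by
        rw [sum_Ico_add', Ico_add_one_right_eq_Icc]
    _ ≤ ∑ k ∈ Ico m n, (f k - f (k + 1)) := sum_le_sum h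
    _ = f m - f n := by
        rw [← neg_sub, ← sum_Ico_sub f hmn, ← sum_neg_distrib]
        simp only [neg_sub]

/-- Summation bound for the momentum phase of the SGMEM stability analysis,
obtained via the exponential integral `E₁`:
`Σ_{t=t̃+1}^{t_d} e^{2μ(t_d−t)}/t ≤ e^{2μ(t_d−t̃)}·ln(1+1/(2μt̃)) − (1/2)·ln(1+1/(μt_d))`. -/
theorem stmt_16 (μ : ℝ) (hμ : 0 < μ) (tt td : ℕ) (htt : 1 ≤ tt) (httd : tt < td) :
    ∑ t ∈ Finset.Icc (tt + 1) td, Real.exp (2 * μ * ((td : ℝ) - (t : ℝ))) / (t : ℝ) ≤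
      Real.exp (2 * μ * ((td : ℝ) - (tt : ℝ))) * Real.log (1 + 1 / (2 * μ * (tt : ℝ)))
        - (1 / 2) * Real.log (1 + 1 / (μ * (td : ℝ))) := by
  set c := 2 * μ with hcμ
  have hc : 0 < c := by positivity
  have hstep : ∀ k ∈ Ico tt td, exp (-(c * ↑(k + 1))) / ↑(k + 1) ≤
      expIntegralBound (c * k) - expIntegralBound (c * ↑(k + 1)) := fun k hk => by
    have hk0 : 0 < k := by have := (mem_Ico.1 hk).1; omega
    simpa using sub_mul_exp_div_le_expIntegralBound_sub hc (b := k + 1)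
      (Nat.cast_pos.2 hk0) (le_add_of_nonneg_right zero_le_one)
  have htd : (0 : ℝ) < td := Nat.cast_pos.2 (by omega)
  have hlog := log_one_add_two_mul_le (y := 1 / (c * td)) (by positivity)
  rw [show 2 * (1 / (c * td)) = 1 / (μ * td) by rw [hcμ]; field_simp] at hlog
  calc ∑ t ∈ Icc (tt + 1) td, exp (c * (td - t)) / t
      = exp (c * td) * ∑ t ∈ Icc (tt + 1) td, exp (-(c * t)) / t := by
        rw [mul_sum]
        refine sum_congr rfl fun t _ => ?_
        rw [mul_div_assoc', ← exp_add, mul_sub, sub_eq_add_neg]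
    _ ≤ exp (c * td) * (expIntegralBound (c * tt) - expIntegralBound (c * td)) := by
        gcongr
        exact sum_Icc_le_sub_of_le_sub (f := fun k => expIntegralBound (c * k))
          (g := fun k => exp (-(c * k)) / k) httd.le hstep
    _ = exp (c * (td - tt)) * log (1 + 1 / (c * tt)) - log (1 + 1 / (c * td)) := by
        simp only [expIntegralBound, mul_sub, ← mul_assoc, ← exp_add]
        simp [sub_eq_add_neg]
    _ ≤ _ := by linarith
end
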